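/- arXiv:2104.14023 — 5 statements merged into one kernel-verified Lean document; each statement's English description precedes it below -/
import Mathlib

section
/- For probability measures π on ℝ^(p+q) with marginals μ on ℝ^p and ν on ℝ^q (all with finite second moments), and reference measures υ₁ on ℝ^p, υ₂ on ℝ^q with finite second moments, the quantity T(π) = W₂²(π, υ₁ ⊗ υ₂) − W₂²(μ, υ₁) − W₂²(ν, υ₂) is nonnegative, where W₂ is the 2-Wasserstein distance. -/
/-!
Any coupling `γ` of `π` and `υ₁ ⊗ υ₂` pushes forward, under the coordinate projections, to a
coupling of `μ` and `υ₁` and a coupling of `ν` and `υ₂`, and the squared Euclidean cost splits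
as the sum of the costs of the two blocks of coordinates. Hence the cost of `γ` dominates
`W₂²(μ, υ₁) + W₂²(ν, υ₂)`, and taking the infimum over `γ` gives the claim. The moment
assumptions make all costs integrable, so the integral of the sum is the sum of the integrals.
-/

open MeasureTheory

/-- The set of couplings of two measures. -/
def Couplings {α β : Type*} [MeasurableSpace α] [MeasurableSpace β]
    (μ : Measure α) (ν : Measure β) : Set (Measure (α × β)) :=
  {γ | γ.map Prod.fst = μ ∧ γ.map Prod.snd = ν}

/-- Squared 2-Wasserstein distance between measures on ℝ^n (Euclidean cost). -/
noncomputable def W2sq {n : ℕ} (μ ν : Measure (Fin n → ℝ)) : ℝ :=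
  sInf { c | ∃ γ ∈ Couplings μ ν,
    c = ∫ w, (∑ i, (w.1 i - w.2 i) ^ 2) ∂γ }

/-- Finite second moment. -/
def HasFiniteSecondMoment {n : ℕ} (μ : Measure (Fin n → ℝ)) : Prop :=
  Integrable (fun x => ∑ i, (x i) ^ 2) μ

/-- Projection onto the first `p` coordinates. -/
def proj1 (p q : ℕ) : (Fin (p + q) → ℝ) → (Fin p → ℝ) :=
  fun x i => x (Fin.castAdd q i)

/-- Projection onto the last `q` coordinates. -/
def proj2 (p q : ℕ) : (Fin (p + q) → ℝ) → (Fin q → ℝ) :=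
  fun x i => x (Fin.natAdd p i)

/-- Concatenation map `(ℝ^p) × (ℝ^q) → ℝ^(p+q)`. -/
def pairToVec (p q : ℕ) : (Fin p → ℝ) × (Fin q → ℝ) → (Fin (p + q) → ℝ) :=
  fun z => Fin.append z.1 z.2

def sqDist {n : ℕ} (x y : Fin n → ℝ) : ℝ :=
  ∑ i, (x i - y i) ^ 2

lemma sqDist_nonneg {n : ℕ} (x y : Fin n → ℝ) : 0 ≤ sqDist x y :=
  Finset.sum_nonneg fun _ _ => sq_nonneg _

lemma sqDist_le {n : ℕ} (x y : Fin n → ℝ) :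
    sqDist x y ≤ 2 * ∑ i, (x i) ^ 2 + 2 * ∑ i, (y i) ^ 2 := by
  rw [Finset.mul_sum, Finset.mul_sum, ← Finset.sum_add_distrib]
  exact Finset.sum_le_sum fun i _ => by nlinarith [sq_nonneg (x i + y i)]

lemma sqDist_eq_proj1_add_proj2 (p q : ℕ) (x y : Fin (p + q) → ℝ) :
    sqDist x y = sqDist (proj1 p q x) (proj1 p q y) + sqDist (proj2 p q x) (proj2 p q y) :=
  Fin.sum_univ_add _

lemma measurable_sqDist (n : ℕ) :
    Measurable fun w : (Fin n → ℝ) × (Fin n → ℝ) => sqDist w.1 w.2 :=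
  Finset.measurable_sum _ fun i _ =>
    (((measurable_pi_apply i).comp measurable_fst).sub
      ((measurable_pi_apply i).comp measurable_snd)).pow_const 2

lemma measurable_proj1 (p q : ℕ) : Measurable (proj1 p q) :=
  measurable_pi_lambda _ fun _ => measurable_pi_apply _

lemma measurable_proj2 (p q : ℕ) : Measurable (proj2 p q) :=
  measurable_pi_lambda _ fun _ => measurable_pi_apply _

lemma measurable_pairToVec (p q : ℕ) : Measurable (pairToVec p q) := by
  refine measurable_pi_lambda _ fun i => Fin.addCases (fun j => ?_) (fun j => ?_) i
  · simp only [pairToVec, Fin.append_left]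
    fun_prop
  · simp only [pairToVec, Fin.append_right]
    fun_prop

lemma proj1_comp_pairToVec (p q : ℕ) : proj1 p q ∘ pairToVec p q = Prod.fst := by
  ext z i
  simp [proj1, pairToVec]

lemma proj2_comp_pairToVec (p q : ℕ) : proj2 p q ∘ pairToVec p q = Prod.snd := by
  ext z i
  simp [proj2, pairToVec]

lemma map_proj1_map_pairToVec_prod {p q : ℕ} (υ₁ : Measure (Fin p → ℝ))
    (υ₂ : Measure (Fin q → ℝ)) [IsProbabilityMeasure υ₂] :
    ((υ₁.prod υ₂).map (pairToVec p q)).map (proj1 p q) = υ₁ := by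
  rw [Measure.map_map (measurable_proj1 p q) (measurable_pairToVec p q), proj1_comp_pairToVec]
  exact Measure.fst_prod

lemma map_proj2_map_pairToVec_prod {p q : ℕ} (υ₁ : Measure (Fin p → ℝ))
    (υ₂ : Measure (Fin q → ℝ)) [IsProbabilityMeasure υ₁] [SFinite υ₂] :
    ((υ₁.prod υ₂).map (pairToVec p q)).map (proj2 p q) = υ₂ := by
  rw [Measure.map_map (measurable_proj2 p q) (measurable_pairToVec p q), proj2_comp_pairToVec]
  exact Measure.snd_prod

lemma HasFiniteSecondMoment.map_pairToVec_prod {p q : ℕ}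
    {υ₁ : Measure (Fin p → ℝ)} {υ₂ : Measure (Fin q → ℝ)}
    [IsFiniteMeasure υ₁] [IsFiniteMeasure υ₂]
    (h₁ : HasFiniteSecondMoment υ₁) (h₂ : HasFiniteSecondMoment υ₂) :
    HasFiniteSecondMoment ((υ₁.prod υ₂).map (pairToVec p q)) := by
  have h_sum : ((fun x : Fin (p + q) → ℝ => ∑ i, (x i) ^ 2) ∘ pairToVec p q)
      = fun z => ∑ i, (z.1 i) ^ 2 + ∑ i, (z.2 i) ^ 2 := by
    funext z
    simp [Fin.sum_univ_add, pairToVec]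
  rw [HasFiniteSecondMoment, integrable_map_measure
    (Finset.measurable_sum _ fun i _ => (measurable_pi_apply i).pow_const 2).aestronglyMeasurable
    (measurable_pairToVec p q).aemeasurable, h_sum]
  exact (h₁.comp_fst υ₂).add (h₂.comp_snd υ₁)

section Couplings

variable {α β γ δ : Type*} [MeasurableSpace α] [MeasurableSpace β]
  [MeasurableSpace γ] [MeasurableSpace δ]

lemma prod_mem_couplings (μ : Measure α) (ν : Measure β)
    [IsProbabilityMeasure μ] [IsProbabilityMeasure ν] : μ.prod ν ∈ Couplings μ ν :=
  ⟨Measure.fst_prod, Measure.snd_prod⟩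

lemma map_prodMap_mem_couplings {μ : Measure α} {ν : Measure β} {ρ : Measure (α × β)}
    (hρ : ρ ∈ Couplings μ ν) {f : α → γ} {g : β → δ} (hf : Measurable f) (hg : Measurable g) :
    ρ.map (Prod.map f g) ∈ Couplings (μ.map f) (ν.map g) := by
  obtain ⟨h₁, h₂⟩ := hρ
  constructor
  · rw [Measure.map_map measurable_fst (hf.prodMap hg), ← h₁,
      Measure.map_map hf measurable_fst]
    rfl
  · rw [Measure.map_map measurable_snd (hf.prodMap hg), ← h₂,
      Measure.map_map hg measurable_snd]
    rfl

end Couplings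

lemma W2sq_le_integral {n : ℕ} {μ ν : Measure (Fin n → ℝ)}
    {γ : Measure ((Fin n → ℝ) × (Fin n → ℝ))} (hγ : γ ∈ Couplings μ ν) :
    W2sq μ ν ≤ ∫ w, sqDist w.1 w.2 ∂γ :=
  csInf_le ⟨0, by rintro _ ⟨_, -, rfl⟩; exact integral_nonneg fun w => sqDist_nonneg w.1 w.2⟩
    ⟨γ, hγ, rfl⟩

lemma W2sq_map_le_integral {m n : ℕ} {μ ν : Measure (Fin m → ℝ)}
    {γ : Measure ((Fin m → ℝ) × (Fin m → ℝ))} (hγ : γ ∈ Couplings μ ν)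
    {f : (Fin m → ℝ) → (Fin n → ℝ)} (hf : Measurable f) :
    W2sq (μ.map f) (ν.map f) ≤ ∫ w, sqDist (f w.1) (f w.2) ∂γ := by
  refine (W2sq_le_integral (map_prodMap_mem_couplings hγ hf hf)).trans_eq ?_
  rw [integral_map (hf.prodMap hf).aemeasurable (measurable_sqDist n).aestronglyMeasurable]
  rfl

lemma integrable_sqDist_of_mem_couplings {n : ℕ} {μ ν : Measure (Fin n → ℝ)}
    (hμ : HasFiniteSecondMoment μ) (hν : HasFiniteSecondMoment ν)
    {γ : Measure ((Fin n → ℝ) × (Fin n → ℝ))} (hγ : γ ∈ Couplings μ ν) :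
    Integrable (fun w => sqDist w.1 w.2) γ := by
  obtain ⟨rfl, rfl⟩ := hγ
  have h₁ := hμ.comp_measurable measurable_fst
  have h₂ := hν.comp_measurable measurable_snd
  refine ((h₁.const_mul 2).add (h₂.const_mul 2)).mono'
    (measurable_sqDist n).aestronglyMeasurable (ae_of_all _ fun w => ?_)
  rw [Real.norm_of_nonneg (sqDist_nonneg _ _)]
  exact sqDist_le w.1 w.2

theorem W2sq_map_proj1_add_W2sq_map_proj2_le {p q : ℕ} (π X : Measure (Fin (p + q) → ℝ))
    [IsProbabilityMeasure π] [IsProbabilityMeasure X]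
    (hπ : HasFiniteSecondMoment π) (hX : HasFiniteSecondMoment X) :
    W2sq (π.map (proj1 p q)) (X.map (proj1 p q)) + W2sq (π.map (proj2 p q)) (X.map (proj2 p q))
      ≤ W2sq π X := by
  refine le_csInf ⟨_, π.prod X, prod_mem_couplings π X, rfl⟩ ?_
  rintro _ ⟨γ, hγ, rfl⟩
  have h_cost := integrable_sqDist_of_mem_couplings hπ hX hγ
  have h_block : ∀ {k : ℕ} {f : (Fin (p + q) → ℝ) → (Fin k → ℝ)}, Measurable f →
      (∀ x y, sqDist (f x) (f y) ≤ sqDist x y) →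
        Integrable (fun w => sqDist (f w.1) (f w.2)) γ := fun hf hle =>
    h_cost.mono' ((measurable_sqDist _).comp (hf.prodMap hf)).aestronglyMeasurable
      (ae_of_all _ fun w => by
        rw [Real.norm_of_nonneg (sqDist_nonneg _ _)]
        exact hle w.1 w.2)
  have h₁ := h_block (measurable_proj1 p q) fun x y => by
    rw [sqDist_eq_proj1_add_proj2 p q x y]
    exact le_add_of_nonneg_right (sqDist_nonneg _ _)
  have h₂ := h_block (measurable_proj2 p q) fun x y => by
    rw [sqDist_eq_proj1_add_proj2 p q x y]
    exact le_add_of_nonneg_left (sqDist_nonneg _ _)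
  calc _ ≤ ∫ w, sqDist (proj1 p q w.1) (proj1 p q w.2) ∂γ
          + ∫ w, sqDist (proj2 p q w.1) (proj2 p q w.2) ∂γ :=
        add_le_add (W2sq_map_le_integral hγ (measurable_proj1 p q))
          (W2sq_map_le_integral hγ (measurable_proj2 p q))
    _ = ∫ w, sqDist w.1 w.2 ∂γ := by
        rw [← integral_add h₁ h₂]
        simp only [← sqDist_eq_proj1_add_proj2]

/-- `T(π) = W₂²(π, υ₁ ⊗ υ₂) − W₂²(μ, υ₁) − W₂²(ν, υ₂) ≥ 0`. -/
theorem T_nonneg (p q : ℕ)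
    (π : Measure (Fin (p + q) → ℝ)) [IsProbabilityMeasure π]
    (υ₁ : Measure (Fin p → ℝ)) [IsProbabilityMeasure υ₁]
    (υ₂ : Measure (Fin q → ℝ)) [IsProbabilityMeasure υ₂]
    (hπ : HasFiniteSecondMoment π)
    (hυ₁ : HasFiniteSecondMoment υ₁) (hυ₂ : HasFiniteSecondMoment υ₂)
    (μ : Measure (Fin p → ℝ)) (ν : Measure (Fin q → ℝ))
    (hμ : μ = π.map (proj1 p q)) (hν : ν = π.map (proj2 p q)) :
    0 ≤ W2sq π ((υ₁.prod υ₂).map (pairToVec p q)) - W2sq μ υ₁ - W2sq ν υ₂ := by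
  have : IsProbabilityMeasure ((υ₁.prod υ₂).map (pairToVec p q)) :=
    Measure.isProbabilityMeasure_map (measurable_pairToVec p q).aemeasurable
  have key := W2sq_map_proj1_add_W2sq_map_proj2_le π _ hπ (hυ₁.map_pairToVec_prod hυ₂)
  rw [map_proj1_map_pairToVec_prod, map_proj2_map_pairToVec_prod, ← hμ, ← hν] at key
  linarith
end

section
/- Let Σ and Ξ be positive semidefinite d×d real matrices. The squared Bures–Wasserstein distance d_W²(Σ, Ξ) = trace(Σ) + trace(Ξ) − 2·trace((Σ^{1/2} Ξ Σ^{1/2})^{1/2}) is nonnegative, and equals zero if and only if Σ = Ξ. -/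
open Matrix
open scoped Classical

/-- Positive semidefinite matrix square root, extended by `0` to all matrices. -/
noncomputable def msqrt {n : Type*} [Fintype n] [DecidableEq n]
    (A : Matrix n n ℝ) : Matrix n n ℝ :=
  if h : A.PosSemidef then
    (h.1.eigenvectorUnitary : Matrix n n ℝ) * diagonal ((↑) ∘ (√·) ∘ h.1.eigenvalues) *
      (star h.1.eigenvectorUnitary : Matrix n n ℝ)
  else 0

/-- Squared Bures–Wasserstein distance. -/
noncomputable def BW2 {n : Type*} [Fintype n] [DecidableEq n]
    (S X : Matrix n n ℝ) : ℝ :=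
  S.trace + X.trace - 2 * (msqrt (msqrt S * X * msqrt S)).trace

/-!
Write `A = S^{1/2}`, `B = X^{1/2}` and `P = (A X A)^{1/2} = |B A|`. The polar decomposition of
`B A` gives a partial isometry `U` with `Uᵀ B A = P`, and expanding the traces yields
`d_W²(S, X) = ‖(1 - U Uᵀ) B‖² + ‖B U - A‖²` in the Frobenius norm, the first term being
nonnegative because `1 - U Uᵀ` is an orthogonal projection. If both terms vanish, then
`X = B U Uᵀ B = (B U)(B U)ᵀ = A Aᵀ = S`.
-/

open scoped MatrixOrder

namespace Matrix

variable {m n 𝕜 : Type*} [Fintype m] [Fintype n] [RCLike 𝕜]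

lemma exists_partialIsometry_conjTranspose_mul_eq [DecidableEq n] {C : Matrix m n 𝕜}
    {P : Matrix n n 𝕜} (hP : P.IsHermitian) (hC : Cᴴ * C = P * P) :
    ∃ U : Matrix m n 𝕜, Uᴴ * C = P ∧ U * Uᴴ * U = U := by
  have cfc_mul_mul (f g h : ℝ → ℝ) :
      cfc f P * cfc g P * cfc h P = cfc (fun x => f x * g x * h x) P := by
    have hcont (f : ℝ → ℝ) := (spectrum ℝ P).toFinite.continuousOn f
    rw [← cfc_mul _ _ _ (hcont _) (hcont _), ← cfc_mul _ _ _ (hcont _) (hcont _)]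
  -- `R` is the Moore–Penrose pseudo-inverse of `P`, thanks to the junk value `0⁻¹ = 0`.
  set R := cfc (fun x : ℝ => x⁻¹) P
  have hR : Rᴴ = R := (cfc_predicate (fun x : ℝ => x⁻¹) P : IsSelfAdjoint R)
  have hRPP : R * P * P = P := by
    conv_lhs => rw [← cfc_id ℝ P]
    exact (cfc_mul_mul _ _ _).trans
      ((cfc_congr fun x _ => inv_mul_mul_self x).trans (cfc_id ℝ P))
  have hRPR : R * P * R = R := by
    conv_lhs => rw [← cfc_id ℝ P]
    exact (cfc_mul_mul _ _ _).trans (cfc_congr fun x _ => by simpa using mul_inv_mul_cancel x⁻¹)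
  refine ⟨C * R, ?_, ?_⟩
  · rw [conjTranspose_mul, hR, Matrix.mul_assoc, hC, ← Matrix.mul_assoc, hRPP]
  · calc C * R * (C * R)ᴴ * (C * R) = C * (R * (R * (Cᴴ * C)) * R) := by
          simp only [conjTranspose_mul, hR, Matrix.mul_assoc]
      _ = C * R := by rw [hC, ← Matrix.mul_assoc R P P, hRPP, hRPR]

lemma trace_conjTranspose_mul_self_mul_sub {A B U : Matrix n n ℝ} (hA : A.IsHermitian)
    (hB : B.IsHermitian) :
    ((B * U - A)ᴴ * (B * U - A)).trace
      = (B * (U * Uᴴ) * B).trace - 2 * (Uᴴ * (B * A)).trace + (A * A).trace := by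
  have hcyc : (Uᴴ * (B * (B * U))).trace = (B * (U * Uᴴ) * B).trace := by
    rw [trace_mul_cycle, trace_mul_comm]; simp only [Matrix.mul_assoc]
  have hsymm : (A * (B * U)).trace = (Uᴴ * (B * A)).trace := by
    rw [← star_trivial (A * (B * U)).trace, ← trace_conjTranspose]
    simp only [conjTranspose_mul, hA.eq, hB.eq, Matrix.mul_assoc]
  simp only [conjTranspose_sub, conjTranspose_mul, hA.eq, hB.eq, sub_mul, mul_sub,
    Matrix.mul_assoc, trace_sub, hcyc, hsymm]
  ring

lemma trace_conjTranspose_mul_self_one_sub_mul [DecidableEq n] {B U : Matrix n n ℝ}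
    (hB : B.IsHermitian) (hU : U * Uᴴ * U = U) :
    (((1 - U * Uᴴ) * B)ᴴ * ((1 - U * Uᴴ) * B)).trace
      = (B * B).trace - (B * (U * Uᴴ) * B).trace := by
  have hQ : U * Uᴴ * (U * Uᴴ) = U * Uᴴ := by rw [← Matrix.mul_assoc, hU]
  have hQ' : (1 - U * Uᴴ)ᴴ * (1 - U * Uᴴ) = 1 - U * Uᴴ := by
    simp only [conjTranspose_sub, conjTranspose_one, conjTranspose_mul,
      conjTranspose_conjTranspose, sub_mul, mul_sub, one_mul, mul_one, hQ]
    abel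
  rw [conjTranspose_mul, hB.eq, Matrix.mul_assoc, ← Matrix.mul_assoc (1 - U * Uᴴ)ᴴ, hQ']
  simp only [sub_mul, mul_sub, one_mul, trace_sub, Matrix.mul_assoc]

end Matrix

lemma IsSelfAdjoint.mul_self_eq_mul_self_of_mul_eq {R : Type*} [Semiring R] [StarRing R]
    {a b u : R} (ha : IsSelfAdjoint a) (hb : IsSelfAdjoint b) (hbu : b * u = a)
    (hub : u * star u * b = b) : b * b = a * a :=
  calc b * b = b * (u * star u * b) := by rw [hub]
    _ = b * u * star (b * u) := by rw [star_mul, hb.star_eq]; simp only [mul_assoc]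
    _ = a * a := by rw [hbu, ha.star_eq]

variable {n : Type*} [Fintype n] [DecidableEq n]

lemma msqrt_eq_sqrt {A : Matrix n n ℝ} (hA : A.PosSemidef) : msqrt A = CFC.sqrt A := by
  rw [msqrt, dif_pos hA, CFC.sqrt_eq_cfc, cfc_nnreal_eq_real _ A hA.nonneg, hA.1.cfc_eq,
    IsHermitian.cfc, Unitary.conjStarAlgAut_apply]
  congr 3
  funext i
  simp [Real.coe_toNNReal', hA.eigenvalues_nonneg i]

lemma BW2_self {S : Matrix n n ℝ} (hS : S.PosSemidef) : BW2 S S = 0 := by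
  have hSSS : CFC.sqrt S * S * CFC.sqrt S = S ^ 2 := by
    set A := CFC.sqrt S
    have hAA : A * A = S := CFC.sqrt_mul_sqrt_self S hS.nonneg
    conv_lhs => rw [← hAA]
    rw [pow_two, ← hAA]
    simp only [Matrix.mul_assoc]
  rw [BW2, msqrt_eq_sqrt hS, hSSS, msqrt_eq_sqrt (hS.pow 2), CFC.sqrt_sq S hS.nonneg]
  ring

lemma exists_BW2_eq_trace_add_trace {S X : Matrix n n ℝ} (hS : S.PosSemidef)
    (hX : X.PosSemidef) :
    ∃ U : Matrix n n ℝ, BW2 S X =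
      (((1 - U * Uᴴ) * CFC.sqrt X)ᴴ * ((1 - U * Uᴴ) * CFC.sqrt X)).trace +
      ((CFC.sqrt X * U - CFC.sqrt S)ᴴ * (CFC.sqrt X * U - CFC.sqrt S)).trace := by
  set A := CFC.sqrt S
  set B := CFC.sqrt X
  have hA : A.IsHermitian := (CFC.sqrt_nonneg S).posSemidef.isHermitian
  have hB : B.IsHermitian := (CFC.sqrt_nonneg X).posSemidef.isHermitian
  have hBB : B * B = X := CFC.sqrt_mul_sqrt_self X hX.nonneg
  have hBA : (B * A)ᴴ * (B * A) = A * X * A := by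
    rw [conjTranspose_mul, hA.eq, hB.eq, ← hBB]
    simp only [Matrix.mul_assoc]
  have hAXA : (A * X * A).PosSemidef := hBA ▸ posSemidef_conjTranspose_mul_self (B * A)
  obtain ⟨U, hUP, hU⟩ := exists_partialIsometry_conjTranspose_mul_eq
    (CFC.sqrt_nonneg (A * X * A)).posSemidef.isHermitian
    (hBA.trans (CFC.sqrt_mul_sqrt_self _ hAXA.nonneg).symm)
  refine ⟨U, ?_⟩
  rw [trace_conjTranspose_mul_self_one_sub_mul hB hU, trace_conjTranspose_mul_self_mul_sub hA hB,
    hUP, CFC.sqrt_mul_sqrt_self S hS.nonneg, hBB, BW2,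
    msqrt_eq_sqrt hS, msqrt_eq_sqrt hAXA]
  ring

/-- the squared Bures–Wasserstein distance between positive semidefinite
matrices is nonnegative, and vanishes iff the two matrices are equal. -/
theorem BW2_nonneg_and_eq_zero_iff {d : ℕ} (S X : Matrix (Fin d) (Fin d) ℝ)
    (hS : S.PosSemidef) (hX : X.PosSemidef) :
    0 ≤ BW2 S X ∧ (BW2 S X = 0 ↔ S = X) := by
  obtain ⟨U, hBW⟩ := exists_BW2_eq_trace_add_trace hS hX
  set D₁ := (1 - U * Uᴴ) * CFC.sqrt X
  set D₂ := CFC.sqrt X * U - CFC.sqrt S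
  have h₁ := (posSemidef_conjTranspose_mul_self D₁).trace_nonneg
  have h₂ := (posSemidef_conjTranspose_mul_self D₂).trace_nonneg
  refine ⟨hBW ▸ add_nonneg h₁ h₂, fun h => ?_, fun h => h ▸ BW2_self hS⟩
  have hD₁ : D₁ = 0 := trace_conjTranspose_mul_self_eq_zero_iff.mp (by linarith)
  have hD₂ : D₂ = 0 := trace_conjTranspose_mul_self_eq_zero_iff.mp (by linarith)
  have hUB : U * Uᴴ * CFC.sqrt X = CFC.sqrt X := by
    rw [eq_comm, ← sub_eq_zero]
    simpa only [D₁, sub_mul, one_mul] using hD₁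
  have hXS := IsSelfAdjoint.mul_self_eq_mul_self_of_mul_eq (CFC.sqrt_nonneg S).isSelfAdjoint
    (CFC.sqrt_nonneg X).isSelfAdjoint (sub_eq_zero.mp hD₂) hUB
  rwa [CFC.sqrt_mul_sqrt_self S hS.nonneg, CFC.sqrt_mul_sqrt_self X hX.nonneg, eq_comm] at hXS
end

section
/- Let Σ₁ be a p×p positive semidefinite matrix with eigendecomposition Σ₁ = U₁Λ₁U₁ᵀ and Σ₂ a q×q positive semidefinite matrix with eigendecomposition Σ₂ = U₂Λ₂U₂ᵀ, eigenvalues ordered decreasingly. With Π the p×q upper-left block of the (p+q)×(p+q) identity and Ψ_m = U₁Λ₁^{1/2}ΠΛ₂^{1/2}U₂ᵀ, the block matrix Σ_m = [[Σ₁, Ψ_m],[Ψ_mᵀ, Σ₂]] has eigenvalues λ_{j,1} + λ_{j,2} for j = 1,…,p+q, where λ_{j,1} (resp. λ_{j,2}) denotes the j-th largest eigenvalue of Σ₁ (resp. Σ₂), with the convention λ_{j,1} = 0 for j > p and λ_{j,2} = 0 for j > q. In particular, Σ_m is positive semidefinite. -/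
/-!
Write `E₁`, `E₂` for the first `p`, resp. `q`, rows of the identity of size `p + q`, so that
`E₁ E₁ᵀ = 1`, `E₂ E₂ᵀ = 1` and `E₁ E₂ᵀ = Π`. With `Aₖ = Uₖ Λₖ^{1/2} Eₖ` the blocks of `Σ_m` are the
Gram blocks `Aᵢ Aⱼᵀ`, i.e. `Σ_m = G Gᵀ` for `G` the stack of `A₁` over `A₂`; in particular `Σ_m` is
positive semidefinite. `G Gᵀ` and `Gᵀ G` have the same characteristic polynomial, and
`Gᵀ G = E₁ᵀ Λ₁ E₁ + E₂ᵀ Λ₂ E₂` is diagonal with entries `λ_{j,1} + λ_{j,2}`.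
-/

open Matrix

/-- The `p × q` upper-left block of the identity matrix. -/
def PiBlock (p q : ℕ) : Matrix (Fin p) (Fin q) ℝ :=
  Matrix.of fun i j => if (i : ℕ) = (j : ℕ) then 1 else 0

/-- The maximal off-diagonal block `Ψ_m = U₁ Λ₁^{1/2} Π Λ₂^{1/2} U₂ᵀ`. -/
noncomputable def PsiM {p q : ℕ} (U₁ : Matrix (Fin p) (Fin p) ℝ)
    (l1 : Fin p → ℝ) (U₂ : Matrix (Fin q) (Fin q) ℝ) (l2 : Fin q → ℝ) :
    Matrix (Fin p) (Fin q) ℝ :=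
  U₁ * Matrix.diagonal (fun i => Real.sqrt (l1 i)) * PiBlock p q *
    Matrix.diagonal (fun j => Real.sqrt (l2 j)) * U₂ᵀ

/-- A partitioned `(p+q) × (p+q)` matrix with given blocks, indexed by `Fin (p+q)`. -/
def blockMat {p q : ℕ} (S₁ : Matrix (Fin p) (Fin p) ℝ) (Ψ : Matrix (Fin p) (Fin q) ℝ)
    (S₂ : Matrix (Fin q) (Fin q) ℝ) : Matrix (Fin (p + q)) (Fin (p + q)) ℝ :=
  (Matrix.fromBlocks S₁ Ψ Ψᵀ S₂).submatrix finSumFinEquiv.symm finSumFinEquiv.symm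

/-- Extension of a vector on `Fin p` to `Fin (p+q)` by zero. -/
def extVec {p : ℕ} (q : ℕ) (l : Fin p → ℝ) : Fin (p + q) → ℝ :=
  fun j => if h : (j : ℕ) < p then l ⟨j, h⟩ else 0

theorem exists_perm_comp_eq_of_map_univ_eq {ι α : Type*} [Fintype ι] {f g : ι → α}
    (h : Finset.univ.val.map f = Finset.univ.val.map g) : ∃ σ : Equiv.Perm ι, f ∘ σ = g := by
  classical
  have hcard : ∀ c, Fintype.card {i // g i = c} = Fintype.card {i // f i = c} := fun c => by
    simpa [Fintype.card_subtype, Finset.card, Multiset.count_map, eq_comm] using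
      congrArg (Multiset.count c) h.symm
  exact ⟨Equiv.ofFiberEquiv fun c => Fintype.equivOfCardEq (hcard c),
    funext (Equiv.ofFiberEquiv_map _)⟩

theorem Matrix.IsHermitian.exists_perm_eigenvalues_eq_of_charpoly_eq {n : Type*} [Fintype n]
    [DecidableEq n] {A : Matrix n n ℝ} (hA : A.IsHermitian) {d : n → ℝ}
    (h : A.charpoly = (diagonal d).charpoly) : ∃ σ : Equiv.Perm n, hA.eigenvalues ∘ σ = d := by
  apply exists_perm_comp_eq_of_map_univ_eq
  have := congrArg Polynomial.roots h
  rw [hA.roots_charpoly_eq_eigenvalues, charpoly_diagonal, Polynomial.roots_prod] at this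
  · simpa using this
  · simp [Finset.prod_ne_zero_iff, Polynomial.X_sub_C_ne_zero]

section SqrtFactor

variable {m n : Type*} [Fintype m] [DecidableEq m]
  {U : Matrix m m ℝ} {l : m → ℝ}

theorem nonneg_of_posSemidef_orthogonal_conj (hU : U * Uᵀ = 1)
    (h : (U * diagonal l * Uᵀ).PosSemidef) : 0 ≤ l := by
  rw [← mul_eq_one_comm] at hU
  have hUU : Uᵀ * (U * diagonal l * Uᵀ) * U = diagonal l := calc
    _ = Uᵀ * U * diagonal l * (Uᵀ * U) := by simp only [Matrix.mul_assoc]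
    _ = diagonal l := by rw [hU, Matrix.one_mul, Matrix.mul_one]
  have := h.conjTranspose_mul_mul_same U
  rw [conjTranspose_eq_transpose_of_trivial, hUU] at this
  exact posSemidef_diagonal_iff.mp this

theorem diagonal_sqrt_mul_self (hl : 0 ≤ l) :
    diagonal (fun i => √(l i)) * diagonal (fun i => √(l i)) = diagonal l := by
  rw [diagonal_mul_diagonal]
  exact congrArg diagonal (funext fun i => Real.mul_self_sqrt (hl i))

theorem sqrt_factor_mul_transpose [Fintype n] (U : Matrix m m ℝ) (hl : 0 ≤ l)
    {E : Matrix m n ℝ} (hE : E * Eᵀ = 1) :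
    U * diagonal (fun i => √(l i)) * E * (U * diagonal (fun i => √(l i)) * E)ᵀ =
      U * diagonal l * Uᵀ := by
  simp only [transpose_mul, diagonal_transpose, Matrix.mul_assoc]
  rw [← Matrix.mul_assoc E, hE, Matrix.one_mul, ← Matrix.mul_assoc (diagonal _),
    diagonal_sqrt_mul_self hl]

theorem transpose_mul_sqrt_factor (hU : U * Uᵀ = 1) (hl : 0 ≤ l) (E : Matrix m n ℝ) :
    (U * diagonal (fun i => √(l i)) * E)ᵀ * (U * diagonal (fun i => √(l i)) * E) =
      Eᵀ * diagonal l * E := by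
  rw [← mul_eq_one_comm] at hU
  simp only [transpose_mul, diagonal_transpose, Matrix.mul_assoc]
  rw [← Matrix.mul_assoc Uᵀ, hU, Matrix.one_mul, ← Matrix.mul_assoc (diagonal _),
    diagonal_sqrt_mul_self hl]

end SqrtFactor

theorem transpose_PiBlock (p q : ℕ) : (PiBlock p q)ᵀ = PiBlock q p := by
  ext i j
  simp [PiBlock, eq_comm]

theorem PiBlock_mul_transpose_PiBlock {p q r : ℕ} (h : p ≤ r) :
    PiBlock p r * (PiBlock q r)ᵀ = PiBlock p q := by
  ext i j
  rw [mul_apply, Finset.sum_eq_single ⟨i, i.isLt.trans_le h⟩]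
  · simp [PiBlock, eq_comm]
  · intro k _ hk
    simp [PiBlock, Fin.ext_iff.not.mp hk.symm]
  · simp

theorem PiBlock_self (p : ℕ) : PiBlock p p = 1 := by
  ext i j
  simp [PiBlock, one_apply, Fin.ext_iff]

theorem transpose_PiBlock_mul_diagonal_mul_PiBlock {p r : ℕ} (d : Fin p → ℝ) :
    (PiBlock p r)ᵀ * diagonal d * PiBlock p r =
      diagonal fun j : Fin r => if h : (j : ℕ) < p then d ⟨j, h⟩ else 0 := by
  ext j k
  rw [transpose_PiBlock, mul_apply]
  simp only [mul_diagonal, PiBlock, of_apply, diagonal_apply]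
  split_ifs with hjk hj
  · subst hjk
    rw [Finset.sum_eq_single ⟨j, hj⟩] <;> simp +contextual [Fin.ext_iff]
  all_goals
    refine Finset.sum_eq_zero fun i _ => ?_
    have := i.isLt
    rw [Fin.ext_iff] at *
    split_ifs <;> first | omega | simp

theorem blockMat_gram_eq_mul_transpose {p q : ℕ} {n : Type*} [Fintype n]
    (A₁ : Matrix (Fin p) n ℝ) (A₂ : Matrix (Fin q) n ℝ) :
    blockMat (A₁ * A₁ᵀ) (A₁ * A₂ᵀ) (A₂ * A₂ᵀ) =
      (fromRows A₁ A₂).submatrix finSumFinEquiv.symm id *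
        ((fromRows A₁ A₂).submatrix finSumFinEquiv.symm id)ᵀ := by
  rw [transpose_submatrix, ← submatrix_mul _ _ _ _ _ Function.bijective_id, transpose_fromRows,
    fromRows_mul_fromCols, blockMat, transpose_mul, transpose_transpose]

theorem submatrix_fromRows_transpose_mul_self {p q : ℕ} {n : Type*} [Fintype n]
    (A₁ : Matrix (Fin p) n ℝ) (A₂ : Matrix (Fin q) n ℝ) :
    ((fromRows A₁ A₂).submatrix finSumFinEquiv.symm id)ᵀ *
        (fromRows A₁ A₂).submatrix finSumFinEquiv.symm id = A₁ᵀ * A₁ + A₂ᵀ * A₂ := by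
  rw [transpose_submatrix, ← submatrix_mul _ _ _ _ _ finSumFinEquiv.symm.bijective,
    submatrix_id_id, transpose_fromRows, fromCols_mul_fromRows]

theorem PsiM_eq_mul_transpose {p q r : ℕ} (h : p ≤ r) (U₁ : Matrix (Fin p) (Fin p) ℝ)
    (l1 : Fin p → ℝ) (U₂ : Matrix (Fin q) (Fin q) ℝ) (l2 : Fin q → ℝ) :
    PsiM U₁ l1 U₂ l2 = U₁ * diagonal (fun i => √(l1 i)) * PiBlock p r *
      (U₂ * diagonal (fun j => √(l2 j)) * PiBlock q r)ᵀ := by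
  simp only [PsiM, transpose_mul, diagonal_transpose, Matrix.mul_assoc]
  rw [← Matrix.mul_assoc (PiBlock p r), PiBlock_mul_transpose_PiBlock h]

theorem eigenvalues_blockMat_PsiM_general {p q : ℕ}
    (S₁ : Matrix (Fin p) (Fin p) ℝ) (S₂ : Matrix (Fin q) (Fin q) ℝ)
    (hS₁ : S₁.PosSemidef) (hS₂ : S₂.PosSemidef)
    (U₁ : Matrix (Fin p) (Fin p) ℝ) (l1 : Fin p → ℝ)
    (U₂ : Matrix (Fin q) (Fin q) ℝ) (l2 : Fin q → ℝ)
    (hU₁ : U₁ * U₁ᵀ = 1) (hU₂ : U₂ * U₂ᵀ = 1)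
    (hdec1 : S₁ = U₁ * Matrix.diagonal l1 * U₁ᵀ)
    (hdec2 : S₂ = U₂ * Matrix.diagonal l2 * U₂ᵀ) :
    (blockMat S₁ (PsiM U₁ l1 U₂ l2) S₂).PosSemidef ∧
    ∀ hSm : (blockMat S₁ (PsiM U₁ l1 U₂ l2) S₂).IsHermitian,
      ∃ e : Equiv.Perm (Fin (p + q)),
        ∀ j, hSm.eigenvalues (e j)
          = extVec (p := p) q l1 j + extVec (p := q) p l2 (Fin.cast (Nat.add_comm p q) j) := by
  subst hdec1 hdec2
  have hl1 := nonneg_of_posSemidef_orthogonal_conj hU₁ hS₁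
  have hl2 := nonneg_of_posSemidef_orthogonal_conj hU₂ hS₂
  set A₁ := U₁ * diagonal (fun i => √(l1 i)) * PiBlock p (p + q)
  set A₂ := U₂ * diagonal (fun j => √(l2 j)) * PiBlock q (p + q)
  set G := (fromRows A₁ A₂).submatrix finSumFinEquiv.symm id
  have hE₁ : PiBlock p (p + q) * (PiBlock p (p + q))ᵀ = 1 := by
    rw [PiBlock_mul_transpose_PiBlock (Nat.le_add_right p q), PiBlock_self]
  have hE₂ : PiBlock q (p + q) * (PiBlock q (p + q))ᵀ = 1 := by
    rw [PiBlock_mul_transpose_PiBlock (Nat.le_add_left q p), PiBlock_self]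
  have hGGt : blockMat (U₁ * diagonal l1 * U₁ᵀ) (PsiM U₁ l1 U₂ l2) (U₂ * diagonal l2 * U₂ᵀ) =
      G * Gᵀ := by
    rw [← sqrt_factor_mul_transpose U₁ hl1 hE₁, ← sqrt_factor_mul_transpose U₂ hl2 hE₂,
      PsiM_eq_mul_transpose (Nat.le_add_right p q), blockMat_gram_eq_mul_transpose]
  have hGtG : Gᵀ * G = diagonal fun j =>
      extVec (p := p) q l1 j + extVec (p := q) p l2 (Fin.cast (Nat.add_comm p q) j) := by
    rw [submatrix_fromRows_transpose_mul_self, transpose_mul_sqrt_factor hU₁ hl1,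
      transpose_mul_sqrt_factor hU₂ hl2, transpose_PiBlock_mul_diagonal_mul_PiBlock,
      transpose_PiBlock_mul_diagonal_mul_PiBlock, diagonal_add]
    rfl
  refine ⟨hGGt ▸ posSemidef_self_mul_conjTranspose G, fun hSm => ?_⟩
  obtain ⟨e, he⟩ :=
    hSm.exists_perm_eigenvalues_eq_of_charpoly_eq (by rw [hGGt, charpoly_mul_comm, hGtG])
  exact ⟨e, congrFun he⟩

/-- the eigenvalues of `Σ_m` are `λ_{j,1} + λ_{j,2}`, `j = 1, …, p+q`
(in particular `Σ_m` is positive semidefinite). -/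
theorem eigenvalues_blockMat_PsiM {p q : ℕ}
    (S₁ : Matrix (Fin p) (Fin p) ℝ) (S₂ : Matrix (Fin q) (Fin q) ℝ)
    (hS₁ : S₁.PosSemidef) (hS₂ : S₂.PosSemidef)
    (U₁ : Matrix (Fin p) (Fin p) ℝ) (l1 : Fin p → ℝ)
    (U₂ : Matrix (Fin q) (Fin q) ℝ) (l2 : Fin q → ℝ)
    (hU₁ : U₁ * U₁ᵀ = 1) (hU₂ : U₂ * U₂ᵀ = 1)
    (hl1 : Antitone l1) (hl2 : Antitone l2)
    (hdec1 : S₁ = U₁ * Matrix.diagonal l1 * U₁ᵀ)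
    (hdec2 : S₂ = U₂ * Matrix.diagonal l2 * U₂ᵀ) :
    (blockMat S₁ (PsiM U₁ l1 U₂ l2) S₂).PosSemidef ∧
    ∀ hSm : (blockMat S₁ (PsiM U₁ l1 U₂ l2) S₂).IsHermitian,
      ∃ e : Equiv.Perm (Fin (p + q)),
        ∀ j, hSm.eigenvalues (e j)
          = extVec (p := p) q l1 j + extVec (p := q) p l2 (Fin.cast (Nat.add_comm p q) j) :=
  eigenvalues_blockMat_PsiM_general S₁ S₂ hS₁ hS₂ U₁ l1 U₂ l2 hU₁ hU₂ hdec1 hdec2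
end

section
/- Let Σ₁ ∈ 𝕊^p_≥ and Σ₂ ∈ 𝕊^q_≥ be positive semidefinite matrices with decreasing eigenvalues (λ_{j,1}) and (λ_{j,2}). For any positive semidefinite (p+q)×(p+q) matrix Σ with upper-left diagonal block Σ₁ and lower-right diagonal block Σ₂, the vector of eigenvalues of Σ (in decreasing order) is majorized by the vector (λ_{j,1} + λ_{j,2})_{j=1}^{p+q} (with λ_{j,1} = 0 for j > p and λ_{j,2} = 0 for j > q). -/
open Matrix

/-- `x` is majorized by `y`: after decreasing rearrangement, the partial sums of `x`
are dominated by those of `y`, and the total sums agree. -/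
def Majorized {d : ℕ} (x y : Fin d → ℝ) : Prop :=
  ∃ σ τ : Equiv.Perm (Fin d), Antitone (x ∘ σ) ∧ Antitone (y ∘ τ) ∧
    (∀ k : Fin d, ∑ i ∈ Finset.Iic k, x (σ i) ≤ ∑ i ∈ Finset.Iic k, y (τ i)) ∧
    ∑ i, x i = ∑ i, y i

/-!
Write `Σ = B²` with `B` the symmetric square root and split the columns of `B` as `[C D]`, so that
`Σ = C Cᵀ + D Dᵀ`, `Cᵀ C = Σ₁` and `Dᵀ D = Σ₂`. If `u_j` are orthonormal eigenvectors of `Σ₁`, the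
vectors `g_j = C u_j` are orthogonal with `‖g_j‖² = λ_{j,1}` and `xᵀ C Cᵀ x = ∑ⱼ ⟪g_j, x⟫²`. For `k`
orthonormal eigenvectors `w_i` of `Σ` this gives `∑ᵢ wᵢᵀ C Cᵀ wᵢ = ∑ⱼ λ_{j,1} c_j` with
`c_j ∈ [0, 1]` and `∑ⱼ c_j ≤ k` (Bessel's inequality applied to both families), hence at most the
sum of the `k` largest `λ_{j,1}` (Ky Fan). The same holds for `D`, and the totals agree since
`tr Σ = tr Σ₁ + tr Σ₂`.
-/

open Finset Matrix WithLp

open scoped RealInnerProductSpace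

theorem Finset.sum_mul_le_sum_of_sum_le_card {ι : Type*} [Fintype ι] (s : Finset ι)
    {d c : ι → ℝ} {t : ℝ} (ht : 0 ≤ t)
    (hd_mem : ∀ j ∈ s, t ≤ d j) (hd_not_mem : ∀ j ∉ s, d j ≤ t)
    (hc₀ : ∀ j, 0 ≤ c j) (hc₁ : ∀ j, c j ≤ 1) (hc : ∑ j, c j ≤ #s) :
    ∑ j, d j * c j ≤ ∑ j ∈ s, d j := by
  classical
  have key (j : ι) :
      d j * c j - (if j ∈ s then d j else 0) ≤ t * (c j - if j ∈ s then 1 else 0) := by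
    by_cases hj : j ∈ s
    · simp only [hj, if_true]; nlinarith [hd_mem j hj, hc₁ j]
    · simp only [hj, if_false]; nlinarith [hd_not_mem j hj, hc₀ j]
  have hsum := Finset.sum_le_sum fun j (_ : j ∈ univ) => key j
  simp only [sum_sub_distrib, ← mul_sum, sum_ite_mem, univ_inter, sum_const, nsmul_eq_mul,
    mul_one] at hsum
  nlinarith [mul_nonneg ht (sub_nonneg.2 hc)]

theorem sum_mul_le_sum_filter_lt {r m : ℕ} {d c : Fin r → ℝ} (hd : Antitone d)
    (hd₀ : ∀ j, 0 ≤ d j) (hc₀ : ∀ j, 0 ≤ c j) (hc₁ : ∀ j, c j ≤ 1) (hc : ∑ j, c j ≤ m) :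
    ∑ j, d j * c j ≤ ∑ j ∈ univ.filter (fun j : Fin r => (j : ℕ) < m), d j := by
  rcases lt_or_ge m r with hmr | hrm
  · have hs : univ.filter (fun j : Fin r => (j : ℕ) < m) = Iio ⟨m, hmr⟩ := by ext; simp [Fin.lt_def]
    rw [hs]
    refine Finset.sum_mul_le_sum_of_sum_le_card _ (hd₀ _) (fun j hj => hd (mem_Iio.1 hj).le)
      (fun j hj => hd (not_lt.1 (mt mem_Iio.2 hj))) hc₀ hc₁ ?_
    simpa using hc
  · have hs : univ.filter (fun j : Fin r => (j : ℕ) < m) = univ := by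
      ext j; simpa using j.2.trans_le hrm
    rw [hs]
    exact sum_le_sum fun j _ => mul_le_of_le_one_right (hd₀ j) (hc₁ j)

section InnerProductSpace

variable {E : Type*} [NormedAddCommGroup E] [InnerProductSpace ℝ E]

-- Terms with `g j = 0` vanish because `x / 0 = 0`.
theorem sum_inner_sq_div_norm_sq_le {ι : Type*} {g : ι → E}
    (hg : Pairwise fun j k => ⟪g j, g k⟫ = 0) (s : Finset ι) (x : E) :
    ∑ j ∈ s, ⟪g j, x⟫ ^ 2 / ‖g j‖ ^ 2 ≤ ‖x‖ ^ 2 := by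
  classical
  let e : {j // g j ≠ 0} → E := fun j => ‖g j‖⁻¹ • g j
  have he : Orthonormal ℝ e :=
    ⟨fun j => by simp [e, norm_smul, j.2],
      fun j k hjk => by
        simp [e, real_inner_smul_left, real_inner_smul_right, hg (Subtype.coe_injective.ne hjk)]⟩
  calc ∑ j ∈ s, ⟪g j, x⟫ ^ 2 / ‖g j‖ ^ 2
      = ∑ j ∈ s.subtype (g · ≠ 0), ⟪g j, x⟫ ^ 2 / ‖g j‖ ^ 2 := by
        rw [sum_subtype_eq_sum_filter (fun j => ⟪g j, x⟫ ^ 2 / ‖g j‖ ^ 2), sum_filter_of_ne]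
        intro j _ h
        contrapose! h
        simp [h]
    _ = ∑ j ∈ s.subtype (g · ≠ 0), ⟪e j, x⟫ ^ 2 := by
        refine sum_congr rfl fun j _ => ?_
        simp [e, real_inner_smul_left, mul_pow, div_eq_inv_mul]
    _ ≤ ‖x‖ ^ 2 := by simpa using he.sum_inner_products_le x

theorem sum_sum_inner_sq_le {r m : ℕ} {g : Fin r → E} (hg : Pairwise fun j k => ⟪g j, g k⟫ = 0)
    (hg_anti : Antitone fun j => ‖g j‖ ^ 2) {ι : Type*} {w : ι → E} (hw : Orthonormal ℝ w)
    {s : Finset ι} (hs : #s ≤ m) :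
    ∑ i ∈ s, ∑ j, ⟪g j, w i⟫ ^ 2 ≤ ∑ j ∈ univ.filter (fun j : Fin r => (j : ℕ) < m), ‖g j‖ ^ 2 := by
  set c : Fin r → ℝ := fun j => (∑ i ∈ s, ⟪g j, w i⟫ ^ 2) / ‖g j‖ ^ 2
  have hgc (j : Fin r) : ‖g j‖ ^ 2 * c j = ∑ i ∈ s, ⟪g j, w i⟫ ^ 2 := by
    by_cases hj : g j = 0
    · simp [hj]
    · exact mul_div_cancel₀ _ (by positivity)
  have hc₀ (j : Fin r) : 0 ≤ c j := by positivity
  have hc₁ (j : Fin r) : c j ≤ 1 := by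
    refine div_le_one_of_le₀ ?_ (sq_nonneg _)
    simpa [real_inner_comm] using hw.sum_inner_products_le (s := s) (g j)
  have hc : ∑ j, c j ≤ m :=
    calc ∑ j, c j = ∑ i ∈ s, ∑ j, ⟪g j, w i⟫ ^ 2 / ‖g j‖ ^ 2 := by
          simp only [c, sum_div]
          exact sum_comm
      _ ≤ ∑ i ∈ s, ‖w i‖ ^ 2 := sum_le_sum fun i _ => sum_inner_sq_div_norm_sq_le hg _ (w i)
      _ = #s := by simp [hw.1]
      _ ≤ m := mod_cast hs
  calc ∑ i ∈ s, ∑ j, ⟪g j, w i⟫ ^ 2 = ∑ j, ‖g j‖ ^ 2 * c j := by rw [sum_comm]; simp only [hgc]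
    _ ≤ _ := sum_mul_le_sum_filter_lt hg_anti (fun _ => sq_nonneg _) hc₀ hc₁ hc

end InnerProductSpace

theorem Matrix.PosSemidef.exists_eq_mul_transpose_add_mul_transpose {m n : Type*} [Fintype m]
    [Fintype n] [DecidableEq m] [DecidableEq n] {M : Matrix (m ⊕ n) (m ⊕ n) ℝ}
    (hM : M.PosSemidef) :
    ∃ (C : Matrix (m ⊕ n) m ℝ) (D : Matrix (m ⊕ n) n ℝ),
      Cᵀ * C = M.toBlocks₁₁ ∧ Dᵀ * D = M.toBlocks₂₂ ∧ M = C * Cᵀ + D * Dᵀ := by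
  open scoped MatrixOrder in
  obtain ⟨B, hBt, hBB⟩ : ∃ B : Matrix (m ⊕ n) (m ⊕ n) ℝ, Bᵀ = B ∧ B * B = M :=
    ⟨CFC.sqrt M, by simpa [IsHermitian] using (CFC.sqrt_nonneg M).posSemidef.1,
      CFC.sqrt_mul_sqrt_self M hM.nonneg⟩
  obtain ⟨C, D, rfl⟩ : ∃ C D, B = fromCols C D := ⟨_, _, (fromCols_toCols B).symm⟩
  have hM₁ : M = fromRows Cᵀ Dᵀ * fromCols C D := by rw [← transpose_fromCols, hBt, hBB]
  have hM₂ : M = fromCols C D * fromRows Cᵀ Dᵀ := by rw [← transpose_fromCols, hBt, hBB]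
  rw [fromRows_mul_fromCols] at hM₁
  rw [fromCols_mul_fromRows] at hM₂
  exact ⟨C, D, by simp [hM₁], by simp [hM₁], hM₂⟩

theorem exists_blockMat_eq_mul_transpose_add_mul_transpose {p q : ℕ}
    {S₁ : Matrix (Fin p) (Fin p) ℝ} {S₂ : Matrix (Fin q) (Fin q) ℝ} {Ψ : Matrix (Fin p) (Fin q) ℝ}
    (hS : (blockMat S₁ Ψ S₂).PosSemidef) :
    ∃ (C : Matrix (Fin (p + q)) (Fin p) ℝ) (D : Matrix (Fin (p + q)) (Fin q) ℝ),
      Cᵀ * C = S₁ ∧ Dᵀ * D = S₂ ∧ blockMat S₁ Ψ S₂ = C * Cᵀ + D * Dᵀ := by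
  have hF := (posSemidef_submatrix_equiv finSumFinEquiv.symm).1 hS
  obtain ⟨C, D, hC, hD, hCD⟩ := hF.exists_eq_mul_transpose_add_mul_transpose
  refine ⟨C.submatrix finSumFinEquiv.symm id, D.submatrix finSumFinEquiv.symm id, ?_, ?_, ?_⟩
  · simpa [submatrix_mul_equiv] using hC
  · simpa using hD
  · rw [blockMat, hCD]
    ext i j
    simp [mul_apply]

section Gram

variable {n r : Type*} [Fintype n] [Fintype r]

theorem Matrix.mulVec_dotProduct_mulVec (C : Matrix n r ℝ) (u v : r → ℝ) :
    (C *ᵥ u) ⬝ᵥ (C *ᵥ v) = u ⬝ᵥ (Cᵀ * C) *ᵥ v := by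
  rw [← mulVec_mulVec, mulVec_transpose, dotProduct_comm, dotProduct_mulVec, dotProduct_comm]

theorem OrthonormalBasis.sum_inner_toLp_mulVec_sq (b : OrthonormalBasis r ℝ (EuclideanSpace ℝ r))
    (C : Matrix n r ℝ) (x : EuclideanSpace ℝ n) :
    ∑ j, ⟪toLp 2 (C *ᵥ b j), x⟫ ^ 2 = ofLp x ⬝ᵥ (C * Cᵀ) *ᵥ ofLp x := by
  have h (j : r) : ⟪toLp 2 (C *ᵥ b j), x⟫ = ⟪b j, toLp 2 (Cᵀ *ᵥ ofLp x)⟫ := by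
    simp [EuclideanSpace.inner_eq_star_dotProduct, dotProduct_mulVec, mulVec_transpose]
  simp_rw [h, b.sum_sq_inner_right, ← real_inner_self_eq_norm_sq]
  rw [EuclideanSpace.inner_toLp_toLp, star_trivial, mulVec_dotProduct_mulVec, transpose_transpose]

variable [DecidableEq r]

theorem Matrix.IsHermitian.inner_toLp_mulVec_eigenvectorBasis {S : Matrix r r ℝ}
    (hS : S.IsHermitian) {C : Matrix n r ℝ} (hC : Cᵀ * C = S) (j k : r) :
    ⟪toLp 2 (C *ᵥ hS.eigenvectorBasis j), toLp 2 (C *ᵥ hS.eigenvectorBasis k)⟫ =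
      if j = k then hS.eigenvalues j else 0 := by
  rw [EuclideanSpace.inner_toLp_toLp, star_trivial, mulVec_dotProduct_mulVec, hC,
    hS.mulVec_eigenvectorBasis, dotProduct_smul]
  have h := orthonormal_iff_ite.1 hS.eigenvectorBasis.orthonormal j k
  rw [EuclideanSpace.inner_eq_star_dotProduct, star_trivial] at h
  rw [h]
  split_ifs <;> simp

end Gram

theorem sum_dotProduct_mul_transpose_mulVec_le {n : Type*} [Fintype n] {r m : ℕ}
    {S : Matrix (Fin r) (Fin r) ℝ} (hS : S.IsHermitian) {C : Matrix n (Fin r) ℝ}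
    (hC : Cᵀ * C = S) {l : Fin r → ℝ} (hl : Antitone l) {e : Equiv.Perm (Fin r)}
    (he : ∀ j, hS.eigenvalues (e j) = l j) {ι : Type*} {w : ι → EuclideanSpace ℝ n}
    (hw : Orthonormal ℝ w) {s : Finset ι} (hs : #s ≤ m) :
    ∑ i ∈ s, ofLp (w i) ⬝ᵥ (C * Cᵀ) *ᵥ ofLp (w i) ≤
      ∑ j ∈ univ.filter (fun j : Fin r => (j : ℕ) < m), l j := by
  set g : Fin r → EuclideanSpace ℝ n := fun j => toLp 2 (C *ᵥ hS.eigenvectorBasis (e j))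
  have hg (j k : Fin r) : ⟪g j, g k⟫ = if j = k then l j else 0 := by
    simp only [g, hS.inner_toLp_mulVec_eigenvectorBasis hC, e.injective.eq_iff, he]
  have hgl (j : Fin r) : ‖g j‖ ^ 2 = l j := by rw [← real_inner_self_eq_norm_sq, hg, if_pos rfl]
  calc ∑ i ∈ s, ofLp (w i) ⬝ᵥ (C * Cᵀ) *ᵥ ofLp (w i) = ∑ i ∈ s, ∑ j, ⟪g j, w i⟫ ^ 2 := by
        refine sum_congr rfl fun i _ => ?_
        rw [← hS.eigenvectorBasis.sum_inner_toLp_mulVec_sq C (w i)]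
        exact (Equiv.sum_comp e fun j => ⟪toLp 2 (C *ᵥ hS.eigenvectorBasis j), w i⟫ ^ 2).symm
    _ ≤ ∑ j ∈ univ.filter (fun j : Fin r => (j : ℕ) < m), ‖g j‖ ^ 2 :=
        sum_sum_inner_sq_le (fun j k hjk => by simp [hg, hjk]) (by simpa only [hgl] using hl) hw hs
    _ = _ := by simp only [hgl]

theorem Matrix.IsHermitian.eigenvalues_eq_dotProduct_mulVec {n : Type*} [Fintype n]
    [DecidableEq n] {M : Matrix n n ℝ} (hM : M.IsHermitian) (i : n) :
    hM.eigenvalues i = ofLp (hM.eigenvectorBasis i) ⬝ᵥ M *ᵥ ofLp (hM.eigenvectorBasis i) := by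
  simpa using hM.eigenvalues_eq i

theorem Matrix.IsHermitian.sum_eigenvalues_le_of_eq_add {n : Type*} [Fintype n] [DecidableEq n]
    {p q m : ℕ} {M : Matrix n n ℝ} (hM : M.IsHermitian) {S₁ : Matrix (Fin p) (Fin p) ℝ}
    {S₂ : Matrix (Fin q) (Fin q) ℝ} (hS₁ : S₁.IsHermitian) (hS₂ : S₂.IsHermitian)
    {C : Matrix n (Fin p) ℝ} {D : Matrix n (Fin q) ℝ} (hC : Cᵀ * C = S₁) (hD : Dᵀ * D = S₂)
    (hCD : M = C * Cᵀ + D * Dᵀ) {l₁ : Fin p → ℝ} {l₂ : Fin q → ℝ} (hl₁ : Antitone l₁)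
    (hl₂ : Antitone l₂) {e₁ : Equiv.Perm (Fin p)} {e₂ : Equiv.Perm (Fin q)}
    (he₁ : ∀ j, hS₁.eigenvalues (e₁ j) = l₁ j) (he₂ : ∀ j, hS₂.eigenvalues (e₂ j) = l₂ j)
    {s : Finset n} (hs : #s ≤ m) :
    ∑ i ∈ s, hM.eigenvalues i ≤ ∑ j ∈ univ.filter (fun j : Fin p => (j : ℕ) < m), l₁ j +
      ∑ j ∈ univ.filter (fun j : Fin q => (j : ℕ) < m), l₂ j := by
  set b := hM.eigenvectorBasis
  calc ∑ i ∈ s, hM.eigenvalues i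
      = ∑ i ∈ s, ofLp (b i) ⬝ᵥ (C * Cᵀ) *ᵥ ofLp (b i) +
          ∑ i ∈ s, ofLp (b i) ⬝ᵥ (D * Dᵀ) *ᵥ ofLp (b i) := by
        rw [← sum_add_distrib]
        refine sum_congr rfl fun i _ => ?_
        rw [← dotProduct_add, ← add_mulVec, ← hCD, hM.eigenvalues_eq_dotProduct_mulVec]
    _ ≤ _ := add_le_add (sum_dotProduct_mul_transpose_mulVec_le hS₁ hC hl₁ he₁ b.orthonormal hs)
        (sum_dotProduct_mul_transpose_mulVec_le hS₂ hD hl₂ he₂ b.orthonormal hs)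

theorem Matrix.IsHermitian.trace_eq_sum_of_eigenvalues_comp {n : Type*} [Fintype n]
    [DecidableEq n] {S : Matrix n n ℝ} (hS : S.IsHermitian) {e : Equiv.Perm n} {l : n → ℝ}
    (he : ∀ j, hS.eigenvalues (e j) = l j) :
    S.trace = ∑ j, l j := by
  rw [hS.trace_eq_sum_eigenvalues, ← Equiv.sum_comp e]
  simp [he]

theorem Fin.exists_perm_antitone_comp {α : Type*} [LinearOrder α] {n : ℕ} (f : Fin n → α) :
    ∃ σ : Equiv.Perm (Fin n), Antitone (f ∘ σ) :=
  ⟨Fin.revPerm.trans (Tuple.sort f), (Tuple.monotone_sort f).comp_antitone Fin.rev_anti⟩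

theorem extVec_antitone {p : ℕ} (q : ℕ) {l : Fin p → ℝ} (hl : Antitone l) (hl₀ : ∀ j, 0 ≤ l j) :
    Antitone (extVec q l) := by
  intro i j hij
  simp only [extVec]
  split_ifs with hj hi hi
  · exact hl (Fin.mk_le_mk.2 hij)
  · exact absurd ((Fin.le_def.1 hij).trans_lt hj) hi
  · exact hl₀ _
  · rfl

theorem sum_filter_extVec {p N : ℕ} (q : ℕ) (h : N = p + q) (l : Fin p → ℝ) (P : ℕ → Prop)
    [DecidablePred P] :
    ∑ i ∈ univ.filter (fun i : Fin N => P i), extVec q l (Fin.cast h i) =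
      ∑ j ∈ univ.filter (fun j : Fin p => P j), l j := by
  subst h
  simp [sum_filter, Fin.sum_univ_add, extVec]

/-- The vector `(λ_{j,1} + λ_{j,2})_j` of the statement. -/
def extVecAdd {p q : ℕ} (l₁ : Fin p → ℝ) (l₂ : Fin q → ℝ) : Fin (p + q) → ℝ :=
  fun j => extVec q l₁ j + extVec p l₂ (Fin.cast (Nat.add_comm p q) j)

section extVecAdd

variable {p q : ℕ} {l₁ : Fin p → ℝ} {l₂ : Fin q → ℝ}

theorem extVecAdd_antitone (hl₁ : Antitone l₁) (hl₁₀ : ∀ j, 0 ≤ l₁ j) (hl₂ : Antitone l₂)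
    (hl₂₀ : ∀ j, 0 ≤ l₂ j) : Antitone (extVecAdd l₁ l₂) :=
  (extVec_antitone q hl₁ hl₁₀).add ((extVec_antitone p hl₂ hl₂₀).comp_monotone fun _ _ h => h)

theorem sum_filter_extVecAdd (l₁ : Fin p → ℝ) (l₂ : Fin q → ℝ) (P : ℕ → Prop) [DecidablePred P] :
    ∑ i ∈ univ.filter (fun i : Fin (p + q) => P i), extVecAdd l₁ l₂ i =
      ∑ j ∈ univ.filter (fun j : Fin p => P j), l₁ j +
        ∑ j ∈ univ.filter (fun j : Fin q => P j), l₂ j := by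
  simp only [extVecAdd, sum_add_distrib]
  exact congr_arg₂ (· + ·) (sum_filter_extVec q rfl l₁ P) (sum_filter_extVec p _ l₂ P)

theorem sum_extVecAdd (l₁ : Fin p → ℝ) (l₂ : Fin q → ℝ) :
    ∑ i, extVecAdd l₁ l₂ i = ∑ j, l₁ j + ∑ j, l₂ j := by
  simpa using sum_filter_extVecAdd l₁ l₂ fun _ => True

end extVecAdd

/-- for any positive semidefinite `Σ` with diagonal blocks `Σ₁`, `Σ₂`,
the eigenvalues of `Σ` are majorized by `(λ_{j,1} + λ_{j,2})_j`. -/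
theorem eigenvalues_majorized {p q : ℕ}
    (S₁ : Matrix (Fin p) (Fin p) ℝ) (S₂ : Matrix (Fin q) (Fin q) ℝ)
    (hS₁ : S₁.PosSemidef) (hS₂ : S₂.PosSemidef)
    (l1 : Fin p → ℝ) (l2 : Fin q → ℝ) (hl1 : Antitone l1) (hl2 : Antitone l2)
    (hev1 : ∀ h : S₁.IsHermitian, ∃ e : Equiv.Perm (Fin p), ∀ i, h.eigenvalues (e i) = l1 i)
    (hev2 : ∀ h : S₂.IsHermitian, ∃ e : Equiv.Perm (Fin q), ∀ i, h.eigenvalues (e i) = l2 i)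
    (Ψ : Matrix (Fin p) (Fin q) ℝ)
    (hS : (blockMat S₁ Ψ S₂).PosSemidef)
    (hSm : (blockMat S₁ Ψ S₂).IsHermitian) :
    Majorized hSm.eigenvalues
      (fun j => extVec (p := p) q l1 j + extVec (p := q) p l2 (Fin.cast (Nat.add_comm p q) j)) := by
  obtain ⟨C, D, hC, hD, hCD⟩ := exists_blockMat_eq_mul_transpose_add_mul_transpose hS
  obtain ⟨e₁, he₁⟩ := hev1 hS₁.1
  obtain ⟨e₂, he₂⟩ := hev2 hS₂.1
  obtain ⟨σ, hσ⟩ := Fin.exists_perm_antitone_comp hSm.eigenvalues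
  refine ⟨σ, Equiv.refl _, hσ, extVecAdd_antitone hl1 (fun j => he₁ j ▸ hS₁.eigenvalues_nonneg _)
    hl2 (fun j => he₂ j ▸ hS₂.eigenvalues_nonneg _), fun k => ?_, ?_⟩
  · have hIic : Iic k = univ.filter (fun i : Fin (p + q) => (i : ℕ) < k + 1) := by
      ext i
      simp only [mem_Iic, mem_filter, mem_univ, true_and, Fin.le_def, Nat.lt_succ_iff]
    calc ∑ i ∈ Iic k, hSm.eigenvalues (σ i)
        = ∑ i ∈ (Iic k).map σ.toEmbedding, hSm.eigenvalues i := by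
          rw [sum_map]
          rfl
      _ ≤ _ := hSm.sum_eigenvalues_le_of_eq_add hS₁.1 hS₂.1 hC hD hCD hl1 hl2 he₁ he₂
          (m := k + 1) (by simp)
      _ = _ := by
          rw [hIic]
          exact (sum_filter_extVecAdd l1 l2 (· < k + 1)).symm
  · rw [← hSm.trace_eq_sum_of_eigenvalues_comp (e := Equiv.refl _) (l := hSm.eigenvalues)
      fun _ => rfl, hCD, trace_add, trace_mul_comm C, trace_mul_comm D, hC, hD,
      hS₁.1.trace_eq_sum_of_eigenvalues_comp he₁, hS₂.1.trace_eq_sum_of_eigenvalues_comp he₂]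
    exact (sum_extVecAdd l1 l2).symm
end

section
/- Let A be a real symmetric d×d matrix with d distinct eigenvalues and eigendecomposition A = U L Uᵀ with U orthogonal and L diagonal with strictly decreasing diagonal. For symmetric H_t → H entrywise as t ↓ 0, the map sending a symmetric matrix to the diagonal matrix of its decreasingly ordered eigenvalues satisfies: t^{−1}(L(A + tH_t) − L(A)) converges to the diagonal matrix D_{UᵀHU} whose diagonal equals the diagonal of UᵀHU. -/
open Matrix Filter Topology
open scoped Classical

/-- Rearrangement of a tuple in decreasing order. -/
noncomputable def sortedDesc {n : ℕ} (f : Fin n → ℝ) : Fin n → ℝ :=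
  fun i => (f ∘ Tuple.sort f) i.rev

/-- `L(M)`: the diagonal matrix of the decreasingly ordered eigenvalues of a symmetric
matrix `M` (and `0` for non-Hermitian `M`). -/
noncomputable def Lmap {d : ℕ} (M : Matrix (Fin d) (Fin d) ℝ) :
    Matrix (Fin d) (Fin d) ℝ :=
  if h : M.IsHermitian then Matrix.diagonal (sortedDesc h.eigenvalues) else 0

/-- Diagonal part of a square matrix, as a diagonal matrix. -/
def diagPart {d : ℕ} (A : Matrix (Fin d) (Fin d) ℝ) : Matrix (Fin d) (Fin d) ℝ :=
  Matrix.diagonal fun i => A i i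

/-!
Conjugating by `U` reduces the problem to the perturbation `diagonal ℓ + E` of the diagonal
matrix, with `E = t • Uᵀ Hₜ U = O(t)`. An eigenvector of `diagonal ℓ + E` is concentrated on a
coordinate `j`: by the spectral gap its other coordinates are `O(‖E‖)` relative to the `j`-th one,
so the `j`-th row of the eigen-equation gives `μ = ℓ j + E j j + O(‖E‖²)`. Orthogonality of an
eigenbasis makes these coordinates distinct, and the gap keeps them in order, so the `i`-th
largest eigenvalue is `ℓ i + t (Uᵀ Hₜ U) i i + O(t²)`.
-/
theorem Lmap_mul_mul_transpose {d : ℕ} {U : Matrix (Fin d) (Fin d) ℝ} (hU : U * Uᵀ = 1)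
    (M : Matrix (Fin d) (Fin d) ℝ) : Lmap (U * M * Uᵀ) = Lmap M := by
  have hUU : Uᵀ * U = 1 := mul_eq_one_comm.mp hU
  by_cases hM : M.IsHermitian
  · have hM' : (U * M * Uᵀ).IsHermitian := by
      simpa using isHermitian_mul_mul_conjTranspose U hM
    have hpoly : (U * M * Uᵀ).charpoly = M.charpoly := by
      rw [charpoly_mul_comm, ← Matrix.mul_assoc, hUU, Matrix.one_mul]
    rw [Lmap, Lmap, dif_pos hM, dif_pos hM', (hM'.eigenvalues_eq_eigenvalues_iff hM).2 hpoly]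
  · have hconj : Uᵀ * (U * M * Uᵀ) * U = M := by
      simp only [Matrix.mul_assoc, hUU, Matrix.mul_one, ← Matrix.mul_assoc Uᵀ U, Matrix.one_mul]
    have hM' : ¬ (U * M * Uᵀ).IsHermitian := fun h => hM <| by
      simpa [hconj] using isHermitian_conjTranspose_mul_mul U h
    rw [Lmap, Lmap, dif_neg hM, dif_neg hM']

theorem Lmap_eq_diagonal {d : ℕ} (M : Matrix (Fin d) (Fin d) ℝ) :
    Lmap M = diagonal fun i => Lmap M i i := by
  unfold Lmap
  split_ifs <;> simp

theorem exists_pos_le_abs_sub_of_injective {n : Type*} [Finite n] {ℓ : n → ℝ}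
    (hℓ : Function.Injective ℓ) :
    ∃ δ > 0, ∀ i j, i ≠ j → δ ≤ |ℓ i - ℓ j| := by
  obtain h | h := isEmpty_or_nonempty {p : n × n // p.1 ≠ p.2}
  · exact ⟨1, one_pos, fun i j hij => (h.false ⟨(i, j), hij⟩).elim⟩
  · obtain ⟨p, hp⟩ := Finite.exists_min fun p : {p : n × n // p.1 ≠ p.2} => |ℓ p.1.1 - ℓ p.1.2|
    exact ⟨_, abs_pos.2 (sub_ne_zero.2 (hℓ.ne p.2)), fun i j hij => hp ⟨(i, j), hij⟩⟩

theorem exists_eventually_forall_abs_apply_le {α m n : Type*} [Finite m] [Finite n]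
    {l : Filter α} {K : α → Matrix m n ℝ} {K₀ : Matrix m n ℝ} (hK : Tendsto K l (𝓝 K₀)) :
    ∃ c, ∀ᶠ t in l, ∀ i j, |K t i j| ≤ c := by
  have : Fintype m := Fintype.ofFinite m
  have : Fintype n := Fintype.ofFinite n
  refine ⟨∑ i, ∑ j, (|K₀ i j| + 1), eventually_all.2 fun i => eventually_all.2 fun j => ?_⟩
  have hij : Tendsto (fun t => |K t i j|) l (𝓝 |K₀ i j|) :=
    (tendsto_pi_nhds.1 (tendsto_pi_nhds.1 hK i) j).abs
  filter_upwards [hij.eventually_le_const (lt_add_one _)] with t ht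
  calc |K t i j| ≤ |K₀ i j| + 1 := ht
    _ ≤ ∑ j, (|K₀ i j| + 1) :=
      Finset.single_le_sum (f := fun j => |K₀ i j| + 1) (fun _ _ => by positivity)
        (Finset.mem_univ j)
    _ ≤ ∑ i, ∑ j, (|K₀ i j| + 1) :=
      Finset.single_le_sum (f := fun i => ∑ j, (|K₀ i j| + 1)) (fun _ _ => by positivity)
        (Finset.mem_univ i)

theorem tendsto_inv_mul_sub_of_abs_sub_le {f g : ℝ → ℝ} {a L M : ℝ}
    (hg : Tendsto g (𝓝[>] 0) (𝓝 L)) (hf : ∀ᶠ t in 𝓝[>] 0, |f t - a - t * g t| ≤ M * t ^ 2) :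
    Tendsto (fun t => t⁻¹ * (f t - a)) (𝓝[>] 0) (𝓝 L) := by
  have hrem : Tendsto (fun t => t⁻¹ * (f t - a - t * g t)) (𝓝[>] 0) (𝓝 0) := by
    refine squeeze_zero_norm' (a := fun t => M * t) ?_ ?_
    · filter_upwards [hf, self_mem_nhdsWithin] with t ht (htpos : 0 < t)
      rw [norm_mul, norm_inv, Real.norm_eq_abs, Real.norm_eq_abs, abs_of_pos htpos]
      calc t⁻¹ * |f t - a - t * g t| ≤ t⁻¹ * (M * t ^ 2) := by gcongr
        _ = M * t := by field_simp
    · exact tendsto_nhdsWithin_of_tendsto_nhds (by simpa using (continuous_const_mul M).tendsto 0)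
  have hsum := hrem.add hg
  rw [zero_add] at hsum
  refine hsum.congr' ?_
  filter_upwards [self_mem_nhdsWithin] with t (htpos : 0 < t)
  field_simp
  ring

theorem exists_ne_zero_forall_abs_le {n : Type*} [Finite n] {v : n → ℝ} (hv : v ≠ 0) :
    ∃ j, v j ≠ 0 ∧ ∀ m, |v m| ≤ |v j| := by
  obtain ⟨i, hi⟩ := Function.ne_iff.1 hv
  have : Nonempty n := ⟨i⟩
  obtain ⟨j, hj⟩ := Finite.exists_max fun m => |v m|
  exact ⟨j, fun h => hi (abs_eq_zero.1 (le_antisymm (by simpa [h] using hj i) (abs_nonneg _))), hj⟩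

section PerturbedDiagonal

variable {n : Type*} [Fintype n] {ℓ : n → ℝ} {E : Matrix n n ℝ} {η : ℝ}

theorem abs_mulVec_apply_le (hE : ∀ i j, |E i j| ≤ η) {w : n → ℝ} {b : ℝ}
    (hw : ∀ l, |w l| ≤ b) (m : n) : |(E *ᵥ w) m| ≤ Fintype.card n * η * b := by
  calc |(E *ᵥ w) m| = |∑ l, E m l * w l| := rfl
    _ ≤ ∑ l, |E m l| * |w l| := by
        simpa only [abs_mul] using Finset.abs_sum_le_sum_abs (fun l => E m l * w l) Finset.univ
    _ ≤ ∑ _l : n, η * b := Finset.sum_le_sum fun l _ =>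
        mul_le_mul (hE m l) (hw l) (abs_nonneg _) ((abs_nonneg _).trans (hE m l))
    _ = Fintype.card n * η * b := by simp [mul_assoc]

variable [DecidableEq n]

theorem dotProduct_ne_zero_of_abs_apply_le {v w : n → ℝ} {j : n} {ρ : ℝ}
    (hv : ∀ m ≠ j, |v m| ≤ ρ * |v j|) (hw : ∀ m ≠ j, |w m| ≤ ρ * |w j|)
    (hvj : v j ≠ 0) (hwj : w j ≠ 0) (hρ : Fintype.card n * ρ ^ 2 < 1) : v ⬝ᵥ w ≠ 0 := by
  have hrest : |∑ m ∈ Finset.univ.erase j, v m * w m| ≤ Fintype.card n * ρ ^ 2 * |v j * w j| :=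
    calc |∑ m ∈ Finset.univ.erase j, v m * w m| ≤ ∑ m ∈ Finset.univ.erase j, |v m| * |w m| := by
          simpa only [abs_mul] using
            Finset.abs_sum_le_sum_abs (fun m => v m * w m) (Finset.univ.erase j)
      _ ≤ ∑ _m ∈ Finset.univ.erase j, ρ ^ 2 * |v j * w j| := Finset.sum_le_sum fun m hm => by
          have hm := Finset.ne_of_mem_erase hm
          calc |v m| * |w m| ≤ (ρ * |v j|) * (ρ * |w j|) :=
                mul_le_mul (hv m hm) (hw m hm) (abs_nonneg _) ((abs_nonneg _).trans (hv m hm))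
            _ = ρ ^ 2 * |v j * w j| := by rw [abs_mul]; ring
      _ ≤ Fintype.card n * ρ ^ 2 * |v j * w j| := by
          rw [Finset.sum_const, nsmul_eq_mul, mul_assoc]
          gcongr
          exact_mod_cast (Finset.card_erase_le).trans_eq Finset.card_univ
  have hpos : 0 < |v j * w j| := abs_pos.2 (mul_ne_zero hvj hwj)
  intro h0
  rw [dotProduct, ← Finset.add_sum_erase _ _ (Finset.mem_univ j)] at h0
  rw [eq_neg_of_add_eq_zero_left h0, abs_neg] at hpos hrest
  nlinarith

variable {v : n → ℝ} {μ : ℝ}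

theorem sub_mul_eq_mulVec_apply (hv : (diagonal ℓ + E) *ᵥ v = μ • v) (m : n) :
    (μ - ℓ m) * v m = (E *ᵥ v) m := by
  have := congrFun hv m
  simp only [add_mulVec, Pi.add_apply, mulVec_diagonal, Pi.smul_apply, smul_eq_mul] at this
  linarith

variable {j : n}

theorem abs_sub_mul_abs_le (hE : ∀ i j, |E i j| ≤ η) (hv : (diagonal ℓ + E) *ᵥ v = μ • v)
    (hj : ∀ m, |v m| ≤ |v j|) (m : n) :
    |μ - ℓ m| * |v m| ≤ Fintype.card n * η * |v j| := by
  rw [← abs_mul, sub_mul_eq_mulVec_apply hv]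
  exact abs_mulVec_apply_le hE hj m

theorem abs_sub_le_of_forall_abs_le (hE : ∀ i j, |E i j| ≤ η)
    (hv : (diagonal ℓ + E) *ᵥ v = μ • v) (hvj : v j ≠ 0) (hj : ∀ m, |v m| ≤ |v j|) :
    |μ - ℓ j| ≤ Fintype.card n * η :=
  le_of_mul_le_mul_right (abs_sub_mul_abs_le hE hv hj j) (abs_pos.2 hvj)

variable {δ : ℝ}

theorem abs_apply_le_of_forall_abs_le (hE : ∀ i j, |E i j| ≤ η)
    (hv : (diagonal ℓ + E) *ᵥ v = μ • v) (hvj : v j ≠ 0) (hj : ∀ m, |v m| ≤ |v j|)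
    (hδ : 0 < δ) (hgap : ∀ i j, i ≠ j → δ ≤ |ℓ i - ℓ j|)
    (hsmall : 2 * Fintype.card n * η ≤ δ) {m : n} (hm : m ≠ j) :
    |v m| ≤ 2 * Fintype.card n * η / δ * |v j| := by
  have hfar : δ / 2 ≤ |μ - ℓ m| := by
    have := abs_sub_le_of_forall_abs_le hE hv hvj hj
    have := abs_sub_le (ℓ j) μ (ℓ m)
    have := hgap j m hm.symm
    rw [abs_sub_comm (ℓ j) μ] at *
    linarith
  rw [div_mul_eq_mul_div, le_div_iff₀ hδ]
  nlinarith [abs_sub_mul_abs_le hE hv hj m, mul_le_mul_of_nonneg_right hfar (abs_nonneg (v m))]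

theorem abs_sub_sub_le_of_forall_abs_le (hE : ∀ i j, |E i j| ≤ η)
    (hv : (diagonal ℓ + E) *ᵥ v = μ • v) (hvj : v j ≠ 0) (hj : ∀ m, |v m| ≤ |v j|)
    (hδ : 0 < δ) (hgap : ∀ i j, i ≠ j → δ ≤ |ℓ i - ℓ j|)
    (hsmall : 2 * Fintype.card n * η ≤ δ) :
    |μ - ℓ j - E j j| ≤ 2 * (Fintype.card n * η) ^ 2 / δ := by
  have hη : 0 ≤ η := (abs_nonneg _).trans (hE j j)
  set w := v - Pi.single j (v j)
  have hw : ∀ l, |w l| ≤ 2 * Fintype.card n * η / δ * |v j| := by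
    intro l
    rcases eq_or_ne l j with rfl | hl
    · simp only [w, Pi.sub_apply, Pi.single_eq_same, sub_self, abs_zero]
      positivity
    · simpa [w, hl] using abs_apply_le_of_forall_abs_le hE hv hvj hj hδ hgap hsmall hl
  have hEw : (μ - ℓ j - E j j) * v j = (E *ᵥ w) j := by
    simp only [w, mulVec_sub, mulVec_single, op_smul_eq_smul, Pi.sub_apply, Pi.smul_apply,
      col_apply, smul_eq_mul, ← sub_mul_eq_mulVec_apply hv]
    ring
  have := abs_mulVec_apply_le hE hw j
  rw [← hEw, abs_mul] at this
  refine le_of_mul_le_mul_right (this.trans_eq ?_) (abs_pos.2 hvj)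
  ring

end PerturbedDiagonal

theorem apply_eq_self_of_abs_sub_le {α : Type*} [LinearOrder α] [Finite α] {f ℓ : α → ℝ}
    {τ : α → α} {r : ℝ} (hf : Antitone f) (hℓ : StrictAnti ℓ)
    (hgap : ∀ i j, i ≠ j → 2 * r < |ℓ i - ℓ j|) (hτ : Function.Injective τ)
    (hclose : ∀ i, |f i - ℓ (τ i)| ≤ r) (i : α) : τ i = i := by
  have hmono : Monotone τ := by
    intro a b hab
    by_contra! hlt
    have hgapab := hgap _ _ hlt.ne
    rw [abs_of_pos (sub_pos.2 (hℓ hlt))] at hgapab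
    linarith [hf hab, abs_le.1 (hclose a), abs_le.1 (hclose b)]
  exact (hmono.strictMono_of_injective hτ).apply_eq

theorem sortedDesc_antitone {d : ℕ} (f : Fin d → ℝ) : Antitone (sortedDesc f) :=
  fun _ _ hij => Tuple.monotone_sort f (Fin.rev_le_rev.2 hij)

theorem abs_Lmap_apply_sub_le {d : ℕ} {ℓ : Fin d → ℝ} {E : Matrix (Fin d) (Fin d) ℝ} {δ η : ℝ}
    (hℓ : StrictAnti ℓ) (hδ : 0 < δ) (hgap : ∀ i j, i ≠ j → δ ≤ |ℓ i - ℓ j|)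
    (hE : ∀ i j, |E i j| ≤ η) (hsmall : d * (2 * d * η / δ) ^ 2 < 1)
    (hC : (diagonal ℓ + E).IsHermitian) (i : Fin d) :
    |Lmap (diagonal ℓ + E) i i - ℓ i - E i i| ≤ 2 * (d * η) ^ 2 / δ := by
  have hρ : 2 * d * η / δ < 1 := by
    have hd : (1 : ℝ) ≤ d := by exact_mod_cast i.pos
    have : 0 ≤ 2 * d * η / δ := by have := (abs_nonneg _).trans (hE i i); positivity
    nlinarith
  have hrδ : 2 * d * η < δ := (div_lt_one hδ).1 hρ
  have hrδ' : 2 * (Fintype.card (Fin d)) * η ≤ δ := by simpa using hrδ.le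
  set b := hC.eigenvectorBasis
  have hv : ∀ k, (diagonal ℓ + E) *ᵥ ⇑(b k) = hC.eigenvalues k • ⇑(b k) :=
    hC.mulVec_eigenvectorBasis
  choose τ hτ0 hτ using fun k => exists_ne_zero_forall_abs_le (v := ⇑(b k))
    fun h => b.orthonormal.ne_zero k (by simpa using h)
  -- `2dη/δ` bounds the other coordinates of an eigenvector relative to its largest one, and
  -- `hsmall` makes two eigenvectors with the same largest coordinate non-orthogonal.
  have hconc : ∀ k, ∀ m ≠ τ k, |b k m| ≤ 2 * d * η / δ * |b k (τ k)| := fun k m hm => by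
    simpa using abs_apply_le_of_forall_abs_le hE (hv k) (hτ0 k) (hτ k) hδ hgap hrδ' hm
  have hτinj : Function.Injective τ := by
    intro k k' hkk'
    by_contra hne
    have horth : ⇑(b k') ⬝ᵥ ⇑(b k) = 0 := by
      simpa [EuclideanSpace.inner_eq_star_dotProduct] using b.orthonormal.2 hne
    refine dotProduct_ne_zero_of_abs_apply_le (hconc k') (by rw [← hkk']; exact hconc k)
      (hτ0 k') (hkk' ▸ hτ0 k) (by simpa using hsmall) horth
  have hid := apply_eq_self_of_abs_sub_le (sortedDesc_antitone hC.eigenvalues) hℓ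
    (r := d * η) (fun i j hij => by linarith [hgap i j hij, hrδ])
    (hτinj.comp ((Tuple.sort hC.eigenvalues).injective.comp Fin.rev_injective))
    (fun i => by
      simpa [sortedDesc] using abs_sub_le_of_forall_abs_le hE (hv _) (hτ0 _) (hτ _)) i
  rw [Function.comp_apply, Function.comp_apply] at hid
  have := abs_sub_sub_le_of_forall_abs_le hE (hv (Tuple.sort hC.eigenvalues i.rev))
    (hτ0 _) (hτ _) hδ hgap hrδ'
  rw [hid] at this
  rw [Lmap, dif_pos hC, diagonal_apply_eq, sortedDesc, Function.comp_apply]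
  simpa using this

theorem Lmap_diagonal {d : ℕ} {ℓ : Fin d → ℝ} (hℓ : StrictAnti ℓ) :
    Lmap (diagonal ℓ) = diagonal ℓ := by
  obtain ⟨δ, hδ, hgap⟩ := exists_pos_le_abs_sub_of_injective hℓ.injective
  have hC : (diagonal ℓ + 0).IsHermitian := by simp
  rw [Lmap_eq_diagonal]
  congr 1
  funext i
  have := abs_Lmap_apply_sub_le hℓ hδ hgap (E := 0) (η := 0) (by simp) (by simp) hC i
  simpa [sub_eq_zero] using this

theorem tendsto_Lmap_diagonal_add_smul {d : ℕ} {ℓ : Fin d → ℝ} (hℓ : StrictAnti ℓ)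
    {K : ℝ → Matrix (Fin d) (Fin d) ℝ} {K₀ : Matrix (Fin d) (Fin d) ℝ}
    (hK : Tendsto K (𝓝[>] 0) (𝓝 K₀)) (hKh : ∀ t, (K t).IsHermitian) :
    Tendsto (fun t : ℝ => t⁻¹ • (Lmap (diagonal ℓ + t • K t) - diagonal ℓ)) (𝓝[>] 0)
      (𝓝 (diagPart K₀)) := by
  obtain ⟨δ, hδ, hgap⟩ := exists_pos_le_abs_sub_of_injective hℓ.injective
  obtain ⟨c, hc⟩ := exists_eventually_forall_abs_apply_le hK
  have hsmall : ∀ᶠ t in 𝓝[>] 0, (d : ℝ) * (2 * d * (t * c) / δ) ^ 2 < 1 :=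
    eventually_nhdsWithin_of_eventually_nhds <|
      ((by fun_prop : Continuous fun t : ℝ => (d : ℝ) * (2 * d * (t * c) / δ) ^ 2).tendsto' 0 0
        (by simp)).eventually_lt_const one_pos
  have hest : ∀ i, ∀ᶠ t in 𝓝[>] 0,
      |Lmap (diagonal ℓ + t • K t) i i - ℓ i - t * K t i i| ≤ 2 * (d * c) ^ 2 / δ * t ^ 2 := by
    intro i
    filter_upwards [hc, hsmall, self_mem_nhdsWithin] with t hct hst (ht : 0 < t)
    have hE : ∀ i j, |(t • K t) i j| ≤ t * c := fun i j => by
      rw [Matrix.smul_apply, smul_eq_mul, abs_mul, abs_of_pos ht]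
      exact mul_le_mul_of_nonneg_left (hct i j) ht.le
    have hC := (isHermitian_diagonal ℓ).add ((hKh t).smul (IsSelfAdjoint.all t))
    have := abs_Lmap_apply_sub_le hℓ hδ hgap hE hst hC i
    rw [Matrix.smul_apply, smul_eq_mul] at this
    exact this.trans_eq (by ring)
  have hdiag : ∀ t : ℝ, t⁻¹ • (Lmap (diagonal ℓ + t • K t) - diagonal ℓ)
      = diagonal fun i => t⁻¹ * (Lmap (diagonal ℓ + t • K t) i i - ℓ i) := fun t => by
    nth_rw 1 [Lmap_eq_diagonal]
    rw [diagonal_sub, ← diagonal_smul]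
    rfl
  simp_rw [hdiag]
  exact (continuous_id.matrix_diagonal.tendsto _).comp <| tendsto_pi_nhds.2 fun i =>
    tendsto_inv_mul_sub_of_abs_sub_le (tendsto_pi_nhds.1 (tendsto_pi_nhds.1 hK i) i) (hest i)

theorem ordered_eigenvalues_derivative_general {d : ℕ}
    (A U : Matrix (Fin d) (Fin d) ℝ) (ℓ : Fin d → ℝ)
    (hU : U * Uᵀ = 1) (hℓ : StrictAnti ℓ)
    (hdec : A = U * Matrix.diagonal ℓ * Uᵀ)
    (H : Matrix (Fin d) (Fin d) ℝ)
    (Ht : ℝ → Matrix (Fin d) (Fin d) ℝ) (hHt : ∀ t, (Ht t)ᵀ = Ht t)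
    (hconv : Tendsto Ht (𝓝[>] (0 : ℝ)) (𝓝 H)) :
    Tendsto (fun t : ℝ => t⁻¹ • (Lmap (A + t • Ht t) - Lmap A)) (𝓝[>] (0 : ℝ))
      (𝓝 (diagPart (Uᵀ * H * U))) := by
  have hK : Tendsto (fun t => Uᵀ * Ht t * U) (𝓝[>] 0) (𝓝 (Uᵀ * H * U)) :=
    (((continuous_const.matrix_mul continuous_id).matrix_mul continuous_const).tendsto H).comp
      hconv
  have hKh : ∀ t, (Uᵀ * Ht t * U).IsHermitian := fun t => by
    simpa using isHermitian_conjTranspose_mul_mul U (isHermitian_iff_isSymm.2 (hHt t))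
  have hconj : ∀ t : ℝ, A + t • Ht t = U * (diagonal ℓ + t • (Uᵀ * Ht t * U)) * Uᵀ := fun t => by
    simp only [hdec, Matrix.mul_add, Matrix.add_mul, Matrix.mul_smul, Matrix.smul_mul,
      ← Matrix.mul_assoc, hU, Matrix.one_mul]
    simp only [Matrix.mul_assoc, hU, Matrix.mul_one]
  have hLA : Lmap A = diagonal ℓ := by rw [hdec, Lmap_mul_mul_transpose hU, Lmap_diagonal hℓ]
  simp_rw [hconj, Lmap_mul_mul_transpose hU, hLA]
  exact tendsto_Lmap_diagonal_add_smul hℓ hK hKh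

/-- for a symmetric `A = U L Uᵀ` with `d` distinct (strictly decreasing)
eigenvalues and symmetric `H_t → H` as `t ↓ 0`, the ordered-eigenvalue map satisfies
`t⁻¹(L(A + tH_t) − L(A)) → D_{UᵀHU}`. -/
theorem ordered_eigenvalues_derivative {d : ℕ}
    (A U : Matrix (Fin d) (Fin d) ℝ) (ℓ : Fin d → ℝ)
    (hA : Aᵀ = A) (hU : U * Uᵀ = 1) (hℓ : StrictAnti ℓ)
    (hdec : A = U * Matrix.diagonal ℓ * Uᵀ)
    (H : Matrix (Fin d) (Fin d) ℝ) (hH : Hᵀ = H)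
    (Ht : ℝ → Matrix (Fin d) (Fin d) ℝ) (hHt : ∀ t, (Ht t)ᵀ = Ht t)
    (hconv : Tendsto Ht (𝓝[>] (0 : ℝ)) (𝓝 H)) :
    Tendsto (fun t : ℝ => t⁻¹ • (Lmap (A + t • Ht t) - Lmap A)) (𝓝[>] (0 : ℝ))
      (𝓝 (diagPart (Uᵀ * H * U))) :=
  ordered_eigenvalues_derivative_general A U ℓ hU hℓ hdec H Ht hHt hconv
end
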